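/- Let q ≡ 1 (mod 4) be a prime power. The rank of the transitive permutation group PSL(2,q) acting on P = (F_q²\{0})/⟨i⟩ (i.e., the number of orbits of a point stabilizer on P) is (q-1)/2; equivalently, the associated Schurian association scheme has (q-3)/2 classes. -/

import Mathlib

open Matrix MulAction Pointwise

abbrev SL2 (F : Type) [Field F] := Matrix.SpecialLinearGroup (Fin 2) F

abbrev PSL2 (F : Type) [Field F] := SL2 F ⧸ Subgroup.center (SL2 F)

/-- Nonzero vectors of `F²`. -/
def Vec (F : Type) [Field F] := {v : Fin 2 → F // v ≠ 0}

/-- Two nonzero vectors are related if they differ by multiplication by a power of `i`. -/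
def vrel (F : Type) [Field F] (i : F) (v w : Vec F) : Prop :=
  ∃ n : ℕ, (w.1 : Fin 2 → F) = i ^ n • v.1

/-- The point set `P = (F² \ {0})/⟨i⟩`. -/
def Pts (F : Type) [Field F] (i : F) := Quot (vrel F i)

/-- The class of a nonzero vector in `P`. -/
def mkPt (F : Type) [Field F] (i : F) (v : Fin 2 → F) (hv : v ≠ 0) : Pts F i :=
  Quot.mk _ ⟨v, hv⟩

lemma vec_fst_ne_zero {F : Type} [Field F] (b : F) : ![(1 : F), b] ≠ 0 := by
  intro h
  simpa using congrFun h 0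

lemma vec_snd_ne_zero {F : Type} [Field F] (a : F) : ![a, (1 : F)] ≠ 0 := by
  intro h
  simpa using congrFun h 1

/-- `SL(2,q)` acts on nonzero vectors. -/
def slVecSMul {F : Type} [Field F] (A : SL2 F) (v : Vec F) : Vec F :=
  ⟨(A : Matrix (Fin 2) (Fin 2) F) *ᵥ v.1, by
    intro h
    apply v.2
    have h2 : ((A⁻¹ : SL2 F) : Matrix (Fin 2) (Fin 2) F) *ᵥ
        ((A : Matrix (Fin 2) (Fin 2) F) *ᵥ v.1) = 0 := by rw [h, Matrix.mulVec_zero]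
    rwa [Matrix.mulVec_mulVec, ← Matrix.SpecialLinearGroup.coe_mul, inv_mul_cancel,
      Matrix.SpecialLinearGroup.coe_one, Matrix.one_mulVec] at h2⟩

instance (F : Type) [Field F] (i : F) : SMul (SL2 F) (Pts F i) :=
  ⟨fun A => Quot.map (slVecSMul A) (by
    rintro v w ⟨n, hn⟩
    exact ⟨n, by simp [slVecSMul, hn, Matrix.mulVec_smul]⟩)⟩

instance (F : Type) [Field F] (i : F) : MulAction (SL2 F) (Pts F i) where
  one_smul p := by
    induction p using Quot.ind with | _ v => ?_
    show Quot.mk _ (slVecSMul 1 v) = Quot.mk _ v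
    congr 1
    apply Subtype.ext
    simp [slVecSMul, Subtype.ext_iff]
  mul_smul A B p := by
    induction p using Quot.ind with | _ v => ?_
    show Quot.mk _ (slVecSMul (A * B) v) = Quot.mk _ (slVecSMul A (slVecSMul B v))
    congr 1
    apply Subtype.ext
    simp only [slVecSMul, Matrix.SpecialLinearGroup.coe_mul, Matrix.mulVec_mulVec]

/-- The stabilizer in `PSL(2,q)` of a point of `P`, i.e. the image in the quotient
`PSL(2,q) = SL(2,q)/center` of the stabilizer in `SL(2,q)`. -/
def pslPtStab (F : Type) [Field F] (i : F) (p : Pts F i) : Subgroup (PSL2 F) :=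
  (MulAction.stabilizer (SL2 F) p).map (QuotientGroup.mk' (Subgroup.center (SL2 F)))

/-- The setwise stabilizer in `PSL(2,q)` of a set of points of `P`. -/
def pslSetStab (F : Type) [Field F] (i : F) (s : Set (Pts F i)) : Subgroup (PSL2 F) :=
  (MulAction.stabilizer (SL2 F) s).map (QuotientGroup.mk' (Subgroup.center (SL2 F)))

/-! The stabilizer of `[e₁]` in `SL(2, F)` consists of the matrices `!![i⁻ⁿ, b; 0, iⁿ]`, which send
`(x, y)` to `(i⁻ⁿ x + b y, iⁿ y)`. Hence the orbit of `[(x, y)]` is determined by the class of `y`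
in `F^× / ⟨i⟩` when `y ≠ 0`, and by the class of `x` when `y = 0`; every class occurs, and any two
points with the same invariant are joined by a suitable choice of `n` and `b`. So there are
`2 [F^× : ⟨i⟩] = 2 (q - 1) / 4` orbits, `i` having order `4` because `q` is odd. -/

lemma MulAction.card_setOf_eq_orbit (G α : Type*) [Group G] [MulAction G α] :
    Nat.card {s : Set α | ∃ x, s = orbit G x} = Nat.card (orbitRel.Quotient G α) := by
  have : {s : Set α | ∃ x, s = orbit G x} = Set.range (orbitRel.Quotient.orbit (G := G)) := by
    ext s
    constructor
    · rintro ⟨x, rfl⟩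
      exact ⟨⟦x⟧, rfl⟩
    · rintro ⟨x, rfl⟩
      induction x using Quotient.inductionOn' with | h x => exact ⟨x, rfl⟩
  rw [this, Nat.card_range_of_injective orbitRel.Quotient.orbit_injective]

lemma QuotientGroup.sum_map_mk_map_mul {G : Type*} [CommGroup G] {s : Subgroup G} {a b : G}
    (ha : a ∈ s) (hb : b ∈ s) (k : G ⊕ G) :
    ((k.map (a * ·) (b * ·)).map QuotientGroup.mk QuotientGroup.mk : (G ⧸ s) ⊕ (G ⧸ s)) =
      k.map QuotientGroup.mk QuotientGroup.mk := by
  cases k <;> simp [mul_comm a, mul_comm b, QuotientGroup.mk_mul_of_mem, ha, hb]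

lemma QuotientGroup.exists_pow_mul_eq_of_mk_eq {G : Type*} [CommGroup G] [Finite G] {u x y : G}
    (h : (x : G ⧸ Subgroup.zpowers u) = y) : ∃ n : ℕ, y = u ^ n * x := by
  obtain ⟨n, hn : u ^ n = x⁻¹ * y⟩ := mem_powers_iff_mem_zpowers.2 (QuotientGroup.eq.1 h)
  exact ⟨n, by rw [hn, mul_comm, mul_inv_cancel_left]⟩

variable {F : Type} [Field F]

lemma vrel_equivalence [Finite F] (u : Fˣ) : Equivalence (vrel F u) where
  refl _ := ⟨0, by simp⟩
  symm := by
    rintro v w ⟨n, hn⟩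
    obtain ⟨m, hm : u ^ m = (u ^ n)⁻¹⟩ : (u ^ n)⁻¹ ∈ Submonoid.powers u :=
      mem_powers_iff_mem_zpowers.2 (inv_mem (Subgroup.npow_mem_zpowers u n))
    refine ⟨m, ?_⟩
    rw [hn, smul_smul, ← Units.val_pow_eq_pow_val, ← Units.val_pow_eq_pow_val, ← Units.val_mul,
      hm, inv_mul_cancel, Units.val_one, one_smul]
  trans := by
    rintro _ _ _ ⟨n, hn⟩ ⟨m, hm⟩
    exact ⟨m + n, by rw [hm, hn, smul_smul, ← pow_add]⟩

lemma Pts.mk_eq_mk_iff [Finite F] (u : Fˣ) {v w : Vec F} :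
    (Quot.mk (vrel F u) v : Pts F u) = Quot.mk (vrel F u) w ↔ vrel F u v w :=
  Quot.eq.trans (vrel_equivalence u).eqvGen_iff

def SL2.upperTriangular (d : Fˣ) (b : F) : SL2 F :=
  ⟨!![((d⁻¹ : Fˣ) : F), b; 0, d], by simp [det_fin_two_of]⟩

lemma SL2.upperTriangular_mulVec (d : Fˣ) (b : F) (v : Fin 2 → F) :
    (upperTriangular d b : Matrix (Fin 2) (Fin 2) F) *ᵥ v =
      ![((d⁻¹ : Fˣ) : F) * v 0 + b * v 1, d * v 1] := by
  ext j
  fin_cases j <;> simp [upperTriangular, mulVec, dotProduct, Fin.sum_univ_two]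

lemma mem_stabilizer_mkPt_iff [Finite F] (u : Fˣ) (A : SL2 F) :
    A ∈ stabilizer (SL2 F) (mkPt F u ![1, 0] (vec_fst_ne_zero 0)) ↔
      ∃ (n : ℕ) (b : F), A = SL2.upperTriangular (u ^ n) b := by
  constructor
  · intro hA
    obtain ⟨n, hn⟩ := (Pts.mk_eq_mk_iff u).1 hA
    have h0 : (u : F) ^ n * A 0 0 = 1 := by
      simpa [slVecSMul, mulVec, dotProduct] using (congrFun hn 0).symm
    have h1 : A 1 0 = 0 := by
      simpa [slVecSMul, mulVec, dotProduct, u.ne_zero] using congrFun hn 1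
    have h00 : A 0 0 = ((u : F) ^ n)⁻¹ := eq_inv_of_mul_eq_one_right h0
    have h11 : A 1 1 = (u : F) ^ n := by
      have hdet : A 0 0 * A 1 1 - A 0 1 * A 1 0 = 1 := by rw [← det_fin_two]; exact A.2
      rw [h1, mul_zero, sub_zero] at hdet
      rw [eq_inv_of_mul_eq_one_right hdet, h00, inv_inv]
    refine ⟨n, A 0 1, Subtype.ext ?_⟩
    ext j k
    fin_cases j <;> fin_cases k
    all_goals simp [SL2.upperTriangular, h00, h1, h11]
  · rintro ⟨n, b, rfl⟩
    refine Quot.sound ⟨n, ?_⟩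
    ext j
    fin_cases j <;> simp [slVecSMul, SL2.upperTriangular]

lemma Vec.fst_ne_zero_of_snd_eq_zero (v : Vec F) (h : v.1 1 = 0) : v.1 0 ≠ 0 := fun h0 =>
  v.2 (by ext j; fin_cases j <;> simp [h0, h])

open Classical in
noncomputable def Vec.lastNonzero (v : Vec F) : Fˣ ⊕ Fˣ :=
  if h : v.1 1 = 0 then .inl (Units.mk0 (v.1 0) (v.fst_ne_zero_of_snd_eq_zero h))
  else .inr (Units.mk0 (v.1 1) h)

lemma Vec.lastNonzero_eq_map_of_eq {v w : Vec F} (a d : Fˣ) (b : F)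
    (hw : w.1 = ![a * v.1 0 + b * v.1 1, d * v.1 1]) :
    w.lastNonzero = v.lastNonzero.map (a * ·) (d * ·) := by
  have hw0 : w.1 0 = a * v.1 0 + b * v.1 1 := by rw [hw]; rfl
  have hw1 : w.1 1 = d * v.1 1 := by rw [hw]; rfl
  by_cases hv : v.1 1 = 0
  · have hw1' : w.1 1 = 0 := by rw [hw1, hv, mul_zero]
    rw [Vec.lastNonzero, Vec.lastNonzero, dif_pos hv, dif_pos hw1', Sum.map_inl, Sum.inl.injEq,
      Units.ext_iff]
    simp [hw0, hv]
  · have hw1' : w.1 1 ≠ 0 := by rw [hw1]; exact mul_ne_zero d.ne_zero hv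
    rw [Vec.lastNonzero, Vec.lastNonzero, dif_neg hv, dif_neg hw1', Sum.map_inr, Sum.inr.injEq,
      Units.ext_iff]
    simp [hw1]

lemma Vec.lastNonzero_eq_inl_iff {v : Vec F} {x : Fˣ} :
    v.lastNonzero = .inl x ↔ v.1 1 = 0 ∧ v.1 0 = x := by
  unfold Vec.lastNonzero
  split_ifs with h <;> simp [h, Units.ext_iff]

lemma Vec.lastNonzero_eq_inr_iff {v : Vec F} {y : Fˣ} : v.lastNonzero = .inr y ↔ v.1 1 = y := by
  unfold Vec.lastNonzero
  split_ifs with h <;> simp [h, Units.ext_iff, y.ne_zero.symm]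

noncomputable def Pts.lastNonzeroClass (u : Fˣ) :
    Pts F u → (Fˣ ⧸ Subgroup.zpowers u) ⊕ (Fˣ ⧸ Subgroup.zpowers u) :=
  Quot.lift (fun v => v.lastNonzero.map QuotientGroup.mk QuotientGroup.mk) <| by
    rintro v w ⟨n, hn⟩
    have hu : u ^ n ∈ Subgroup.zpowers u := Subgroup.npow_mem_zpowers u n
    have hw : w.1 = ![(u ^ n : Fˣ) * v.1 0 + 0 * v.1 1, (u ^ n : Fˣ) * v.1 1] := by
      rw [hn]; ext j; fin_cases j <;> simp
    rw [Vec.lastNonzero_eq_map_of_eq _ _ _ hw, QuotientGroup.sum_map_mk_map_mul hu hu]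

lemma Pts.lastNonzeroClass_smul [Finite F] (u : Fˣ) {A : SL2 F}
    (hA : A ∈ stabilizer (SL2 F) (mkPt F u ![1, 0] (vec_fst_ne_zero 0))) (p : Pts F u) :
    Pts.lastNonzeroClass u (A • p) = Pts.lastNonzeroClass u p := by
  obtain ⟨n, b, rfl⟩ := (mem_stabilizer_mkPt_iff u A).1 hA
  induction p using Quot.ind with | _ v => ?_
  have hu : u ^ n ∈ Subgroup.zpowers u := Subgroup.npow_mem_zpowers u n
  show (slVecSMul _ v).lastNonzero.map _ _ = v.lastNonzero.map _ _
  rw [Vec.lastNonzero_eq_map_of_eq (u ^ n)⁻¹ (u ^ n) b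
      (SL2.upperTriangular_mulVec (u ^ n) b v.1), QuotientGroup.sum_map_mk_map_mul (inv_mem hu) hu]

lemma Pts.lastNonzeroClass_surjective (u : Fˣ) :
    Function.Surjective (Pts.lastNonzeroClass (F := F) u) := by
  rintro (c | c) <;> obtain ⟨x, rfl⟩ := QuotientGroup.mk_surjective c
  · refine ⟨mkPt F u ![x, 0] (by simp), ?_⟩
    show Sum.map _ _ (Vec.lastNonzero _) = _
    simp [Vec.lastNonzero]
  · refine ⟨mkPt F u ![0, x] (by simp), ?_⟩
    show Sum.map _ _ (Vec.lastNonzero _) = _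
    simp [Vec.lastNonzero]

lemma Pts.exists_smul_eq_of_lastNonzeroClass_eq [Finite F] (u : Fˣ) {p p' : Pts F u}
    (h : Pts.lastNonzeroClass u p = Pts.lastNonzeroClass u p') :
    ∃ A ∈ stabilizer (SL2 F) (mkPt F u ![1, 0] (vec_fst_ne_zero 0)), A • p = p' := by
  induction p using Quot.ind with | _ v => ?_
  induction p' using Quot.ind with | _ w => ?_
  change v.lastNonzero.map _ _ = w.lastNonzero.map _ _ at h
  rcases hv : v.lastNonzero with x | y <;> rcases hw : w.lastNonzero with x' | y' <;>
    simp only [hv, hw, Sum.map_inl, Sum.map_inr, Sum.inl.injEq, Sum.inr.injEq, reduceCtorEq] at h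
  · obtain ⟨n, rfl⟩ := QuotientGroup.exists_pow_mul_eq_of_mk_eq h
    obtain ⟨hv1, hv0⟩ := Vec.lastNonzero_eq_inl_iff.1 hv
    obtain ⟨hw1, hw0⟩ := Vec.lastNonzero_eq_inl_iff.1 hw
    refine ⟨1, one_mem _, (one_smul _ _).trans (Quot.sound ⟨n, ?_⟩)⟩
    ext j
    fin_cases j <;> simp [hv0, hv1, hw0, hw1]
  · obtain ⟨n, rfl⟩ := QuotientGroup.exists_pow_mul_eq_of_mk_eq h
    have hv1 := Vec.lastNonzero_eq_inr_iff.1 hv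
    have hw1 := Vec.lastNonzero_eq_inr_iff.1 hw
    refine ⟨SL2.upperTriangular (u ^ n) ((w.1 0 - ((u ^ n)⁻¹ : Fˣ) * v.1 0) / v.1 1),
      (mem_stabilizer_mkPt_iff u _).2 ⟨n, _, rfl⟩, congrArg (Quot.mk _) (Subtype.ext ?_)⟩
    change _ *ᵥ v.1 = w.1
    rw [SL2.upperTriangular_mulVec]
    ext j
    fin_cases j
    · simp [hv1, y.ne_zero]
    · simp [hv1, hw1]

noncomputable def stabilizerOrbitsEquiv [Finite F] (u : Fˣ) :
    orbitRel.Quotient (stabilizer (SL2 F) (mkPt F u ![1, 0] (vec_fst_ne_zero 0))) (Pts F u) ≃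
      (Fˣ ⧸ Subgroup.zpowers u) ⊕ (Fˣ ⧸ Subgroup.zpowers u) := by
  refine Equiv.ofBijective (Quotient.lift (Pts.lastNonzeroClass u) ?_) ⟨?_, ?_⟩
  · rintro _ p ⟨A, rfl⟩
    exact Pts.lastNonzeroClass_smul u A.2 p
  · intro a b
    induction a, b using Quotient.inductionOn₂ with | _ p p' => ?_
    intro h
    obtain ⟨A, hA, hAp⟩ := Pts.exists_smul_eq_of_lastNonzeroClass_eq u h
    exact (Quotient.sound (show p' ∈ orbit _ p from ⟨⟨A, hA⟩, hAp⟩)).symm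
  · intro c
    obtain ⟨p, hp⟩ := Pts.lastNonzeroClass_surjective u c
    exact ⟨⟦p⟧, hp⟩

theorem card_orbits_stabilizer_mkPt [Finite F] (u : Fˣ) :
    Nat.card {s : Set (Pts F u) | ∃ x,
        s = orbit (stabilizer (SL2 F) (mkPt F u ![1, 0] (vec_fst_ne_zero 0))) x} =
      2 * (Subgroup.zpowers u).index := by
  rw [MulAction.card_setOf_eq_orbit, Nat.card_congr (stabilizerOrbitsEquiv u), Nat.card_sum,
    two_mul]
  rfl

/-- The rank of the transitive permutation group `PSL(2,q)` acting on `P`, i.e. the number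
of orbits of a point stabilizer on `P`, is `(q-1)/2`; equivalently the Schurian association
scheme has `(q-1)/2 - 1 = (q-3)/2` classes. -/
theorem stmt_7 (q : ℕ) (F : Type) [Field F] [Fintype F]
    (hcard : Fintype.card F = q) (hq : q % 4 = 1)
    (i : F) (hi : i ^ 2 = -1) :
    Nat.card {s : Set (Pts F i) | ∃ x : Pts F i,
        s = MulAction.orbit (↥(MulAction.stabilizer (SL2 F) (mkPt F i ![1, 0] (vec_fst_ne_zero 0)))) x} = (q - 1) / 2 ∧
    Nat.card {s : Set (Pts F i) | ∃ x : Pts F i,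
        s = MulAction.orbit (↥(MulAction.stabilizer (SL2 F) (mkPt F i ![1, 0] (vec_fst_ne_zero 0)))) x} - 1 = (q - 3) / 2 := by
  classical
  obtain ⟨u, rfl⟩ : ∃ u : Fˣ, (u : F) = i := ⟨Units.mk0 i (by rintro rfl; simp at hi), rfl⟩
  have hu2 : u ^ 2 = -1 := Units.ext (by simpa using hi)
  have hchar : ringChar F ≠ 2 := fun h => by
    have := FiniteField.even_card_of_char_two h
    omega
  have horder : orderOf u = 4 := by
    refine orderOf_eq_prime_pow (p := 2) (n := 1) ?_ ?_
    · rw [pow_one, hu2, Units.ext_iff]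
      exact Ring.neg_one_ne_one_of_char_ne_two hchar
    · rw [show 2 ^ (1 + 1) = 2 * 2 from rfl, pow_mul, hu2, neg_one_sq]
  have hindex : (Subgroup.zpowers u).index * 4 = q - 1 := by
    rw [← hcard, ← Fintype.card_units, ← Nat.card_eq_fintype_card, ← Subgroup.index_mul_card,
      Nat.card_zpowers, horder]
  rw [card_orbits_stabilizer_mkPt u]
  omega
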